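/- Fix a real ε with 0 < ε < 1/2 and let S̄_ε = { x ∈ ℝ : x − ⌊x⌋ ∈ [ε, 1−ε] }. There exists a memoryless algorithm M : {L,R} × ℝ → ℝ (which may depend on ε) that solves the exact midpoint localization problem for all lengths in S̄_ε: for every real D with 1 < D < ∞ and D ∈ S̄_ε, the dynamics F_D induced by M maps [-D,D] into [-D,D], and for every x₀ ∈ [-D,D] there exists a finite integer n ≥ 0 such that F_D^n(x₀) = 0. -/
import Mathlib

inductive Side
  | L
  | R

/-- The exact dynamics on `[-D, D]` induced by the memoryless algorithm `M`:
the walker at `x > 0` observes `(R, D - x)`, at `x < 0` observes `(L, D + x)`,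
and moves by the displacement `M` prescribes; it stays at the midpoint `0`. -/
noncomputable def step (M : Side × ℝ → ℝ) (D x : ℝ) : ℝ :=
  if 0 < x then x + M (Side.R, D - x)
  else if x < 0 then x + M (Side.L, D + x)
  else 0

/-! ### The memoryless algorithm

On the right side (observation `(R, v)`, position `x = D - v`):
* if `fract v = 0` (integer ladder): move left by `1`;
* if `fract v = 1/2 - ε/4` (special marker): move left by `ε/4`;
* if `fract v ∈ (0, 1/2 - ε] ∪ (1 - ε, 1)` ("x = 1/2" fix class): move left by `1/2`;
* otherwise: reset, i.e. jump to the right wall (move by `v`).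

On the left side (observation `(L, w)`, position `x = w - D`, write `s = fract w`):
* if `s = 0`: move right by `1/2 + ε/4`;
* if `s ≤ 1 - 2ε`: move right by `1 - s/2` (decode-and-test);
* otherwise: move right by `3/2 - s/2` (overshooting decode). -/

noncomputable def MR (ε v : ℝ) : ℝ :=
  if Int.fract v = 0 then -1
  else if Int.fract v = 1/2 - ε/4 then -(ε/4)
  else if Int.fract v ≤ 1/2 - ε ∨ 1 - ε < Int.fract v then -(1/2)
  else v

noncomputable def ML (ε w : ℝ) : ℝ :=
  if Int.fract w = 0 then 1/2 + ε/4
  else if Int.fract w ≤ 1 - 2*ε then 1 - Int.fract w / 2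
  else 3/2 - Int.fract w / 2

noncomputable def Mfun (ε : ℝ) : Side × ℝ → ℝ := fun p =>
  match p with
  | (Side.R, v) => MR ε v
  | (Side.L, w) => ML ε w

lemma step_pos (ε D x : ℝ) (hx : 0 < x) :
    step (Mfun ε) D x = x + MR ε (D - x) := by
  unfold step; rw [if_pos hx]; rfl

lemma step_neg (ε D x : ℝ) (hx : x < 0) :
    step (Mfun ε) D x = x + ML ε (D + x) := by
  unfold step; rw [if_neg (not_lt.mpr hx.le), if_pos hx]; rfl

lemma fract_eq_of {t b : ℝ} (z : ℤ) (ht : t = b + z) (h0 : 0 ≤ b) (h1 : b < 1) :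
    Int.fract t = b := by
  rw [ht, Int.fract_add_intCast, Int.fract_eq_self.mpr ⟨h0, h1⟩]

lemma MR_ladder (ε v : ℝ) (h : Int.fract v = 0) : MR ε v = -1 := by
  unfold MR; rw [if_pos h]

lemma MR_B7 (ε v : ℝ) (hε0 : 0 < ε) (hε1 : ε < 1/2) (h : Int.fract v = 1/2 - ε/4) :
    MR ε v = -(ε/4) := by
  unfold MR
  rw [if_neg (by rw [h]; intro h'; linarith), if_pos h]

lemma MR_fix (ε v : ℝ) (h0 : Int.fract v ≠ 0) (h7 : Int.fract v ≠ 1/2 - ε/4)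
    (h : Int.fract v ≤ 1/2 - ε ∨ 1 - ε < Int.fract v) : MR ε v = -(1/2) := by
  unfold MR; rw [if_neg h0, if_neg h7, if_pos h]

lemma MR_reset (ε v : ℝ) (hε1 : ε < 1/2) (h7 : Int.fract v ≠ 1/2 - ε/4)
    (h1 : 1/2 - ε < Int.fract v) (h2 : Int.fract v ≤ 1 - ε) : MR ε v = v := by
  unfold MR
  rw [if_neg (by intro h'; rw [h'] at h1; linarith), if_neg h7,
    if_neg (by push_neg; exact ⟨by linarith, by linarith⟩)]

lemma ML_zero (ε w : ℝ) (h : Int.fract w = 0) : ML ε w = 1/2 + ε/4 := by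
  unfold ML; rw [if_pos h]

lemma ML_mid (ε w : ℝ) (h0 : Int.fract w ≠ 0) (h : Int.fract w ≤ 1 - 2*ε) :
    ML ε w = 1 - Int.fract w / 2 := by
  unfold ML; rw [if_neg h0, if_pos h]

lemma ML_big (ε w : ℝ) (hε1 : ε < 1/2) (h : 1 - 2*ε < Int.fract w) :
    ML ε w = 3/2 - Int.fract w / 2 := by
  unfold ML
  rw [if_neg (by intro h'; rw [h'] at h; linarith), if_neg (not_le.mpr h)]

lemma ML_lb (ε w : ℝ) (hε0 : 0 < ε) (hε1 : ε < 1/2) : 1/2 + ε/4 ≤ ML ε w := by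
  have h1 := Int.fract_nonneg w
  have h2 := Int.fract_lt_one w
  unfold ML; split_ifs with g1 g2 <;> linarith

lemma ML_lb' (ε w : ℝ) (hε0 : 0 < ε) (hε1 : ε < 1/2) (h0 : Int.fract w ≠ 0) :
    1/2 + ε ≤ ML ε w := by
  have h1 := Int.fract_nonneg w
  have h2 := Int.fract_lt_one w
  unfold ML; split_ifs with g1 g2
  · exact absurd g1 h0
  · linarith
  · linarith

lemma ML_ub (ε w : ℝ) (hε0 : 0 < ε) : ML ε w ≤ 1 + ε := by
  have h1 := Int.fract_nonneg w
  unfold ML; split_ifs with g1 g2 <;> linarith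

/-- The walker starting at `x` eventually reaches the midpoint exactly. -/
def Reaches (ε D x : ℝ) : Prop := ∃ k : ℕ, (step (Mfun ε) D)^[k] x = 0

lemma reaches_zero (ε D : ℝ) : Reaches ε D 0 := ⟨0, rfl⟩

lemma reaches_step {ε D x : ℝ} (h : Reaches ε D (step (Mfun ε) D x)) : Reaches ε D x := by
  obtain ⟨k, hk⟩ := h
  exact ⟨k + 1, by rwa [Function.iterate_succ_apply]⟩

lemma reaches_of_eq {ε D x y : ℝ} (h : step (Mfun ε) D x = y) (hy : Reaches ε D y) :
    Reaches ε D x := reaches_step (h ▸ hy)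

lemma floor_ge_one {D : ℝ} (hD : 1 < D) : (1 : ℝ) ≤ (⌊D⌋ : ℝ) := by
  exact_mod_cast Int.le_floor.mpr (by exact_mod_cast hD.le)

lemma D_ge (ε D : ℝ) (hD : 1 < D) (hfl : ε ≤ Int.fract D) : 1 + ε ≤ D := by
  have h1 := floor_ge_one hD
  have h2 : (⌊D⌋ : ℝ) + Int.fract D = D := Int.floor_add_fract D
  linarith

/-- A left state within `ε/4` of the midpoint cannot have integral observation,
because `fract D ≥ ε`. -/
lemma fract_ne_zero_near (ε D y : ℝ) (hε0 : 0 < ε) (hε1 : ε < 1/2)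
    (hfl : ε ≤ Int.fract D) (hy1 : -(ε/4) < y) (hy0 : y < 0) :
    Int.fract (D + y) ≠ 0 := by
  intro h
  have hfe : (⌊D + y⌋ : ℝ) + Int.fract (D + y) = D + y := Int.floor_add_fract _
  rw [h, add_zero] at hfe
  have h1 : (⌊D + y⌋ : ℝ) ≤ D := by linarith
  have h2 : D < (⌊D + y⌋ : ℝ) + 1 := by linarith
  have hfloor : ⌊D⌋ = ⌊D + y⌋ := by
    apply Int.floor_eq_iff.mpr
    exact ⟨h1, h2⟩
  have : Int.fract D = D - (⌊D + y⌋ : ℝ) := by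
    rw [Int.fract, hfloor]
  rw [this] at hfl
  linarith

/-- From the canonical "fresh" position `fract D - 1` (reached when the integer
ladder crosses the midpoint), the walker reaches `0` in at most two steps. -/
lemma reaches_fresh (ε D : ℝ) (hε0 : 0 < ε) (hε1 : ε < 1/2) (hD : 1 < D)
    (hfl : ε ≤ Int.fract D) (hfu : Int.fract D ≤ 1 - ε) :
    Reaches ε D (Int.fract D - 1) := by
  set f := Int.fract D with hfdef
  have hf1 : f < 1 := Int.fract_lt_one D
  have hf0 : 0 < f := lt_of_lt_of_le hε0 hfl
  have hDnf : (⌊D⌋ : ℝ) + f = D := Int.floor_add_fract D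
  have hx : f - 1 < 0 := by linarith
  have hstep1 : step (Mfun ε) D (f - 1) = (f - 1) + ML ε (D + (f - 1)) := step_neg ε D _ hx
  rcases lt_trichotomy f (1/2) with hc | hc | hc
  · -- f < 1/2 : observation fract is 2f
    have hs : Int.fract (D + (f - 1)) = 2*f :=
      fract_eq_of (⌊D⌋ - 1) (by push_cast; linarith) (by linarith) (by linarith)
    rcases le_or_gt f (1/2 - ε) with hc2 | hc2
    · -- decode-and-test is exactly right: lands on 0
      have hML : ML ε (D + (f - 1)) = 1 - (2*f)/2 := by
        rw [ML_mid ε _ (by rw [hs]; positivity) (by rw [hs]; linarith), hs]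
      apply reaches_of_eq (y := 0) _ (reaches_zero ε D)
      rw [hstep1, hML]; ring
    · -- overshooting decode: lands exactly on 1/2, then the fix class finishes
      have hML : ML ε (D + (f - 1)) = 3/2 - (2*f)/2 := by
        rw [ML_big ε _ hε1 (by rw [hs]; linarith), hs]
      apply reaches_of_eq (y := 1/2) (by rw [hstep1, hML]; ring)
      have hφ : Int.fract (D - 1/2) = f + 1/2 :=
        fract_eq_of (⌊D⌋ - 1) (by push_cast; linarith) (by linarith) (by linarith)
      apply reaches_of_eq (y := 0) _ (reaches_zero ε D)
      rw [step_pos ε D _ (by norm_num),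
        MR_fix ε _ (by rw [hφ]; intro h; linarith) (by rw [hφ]; intro h; linarith)
          (Or.inr (by rw [hφ]; linarith))]
      ring
  · -- f = 1/2 : special marker path
    have hs : Int.fract (D + (f - 1)) = 0 :=
      fract_eq_of (⌊D⌋) (by push_cast; linarith) le_rfl (by norm_num)
    apply reaches_of_eq (y := ε/4)
      (by rw [hstep1, ML_zero ε _ hs, hc]; ring)
    have hφ : Int.fract (D - ε/4) = 1/2 - ε/4 :=
      fract_eq_of (⌊D⌋) (by push_cast; linarith) (by linarith) (by linarith)
    apply reaches_of_eq (y := 0) _ (reaches_zero ε D)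
    rw [step_pos ε D _ (by linarith), MR_B7 ε _ hε0 hε1 hφ]; ring
  · -- f > 1/2 : observation fract is 2f - 1; lands on 1/2, fix class finishes
    have hs : Int.fract (D + (f - 1)) = 2*f - 1 :=
      fract_eq_of (⌊D⌋) (by push_cast; linarith) (by linarith) (by linarith)
    have hML : ML ε (D + (f - 1)) = 1 - (2*f - 1)/2 := by
      rw [ML_mid ε _ (by rw [hs]; intro h; linarith) (by rw [hs]; linarith), hs]
    apply reaches_of_eq (y := 1/2) (by rw [hstep1, hML]; ring)
    have hφ : Int.fract (D - 1/2) = f - 1/2 :=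
      fract_eq_of (⌊D⌋) (by push_cast; linarith) (by linarith) (by linarith)
    apply reaches_of_eq (y := 0) _ (reaches_zero ε D)
    rw [step_pos ε D _ (by norm_num),
      MR_fix ε _ (by rw [hφ]; intro h; linarith) (by rw [hφ]; intro h; linarith)
        (Or.inl (by rw [hφ]; linarith))]
    ring

/-- The integer ladder: every position `fract D + j` reaches the midpoint. -/
lemma reaches_ladder (ε D : ℝ) (hε0 : 0 < ε) (hε1 : ε < 1/2) (hD : 1 < D)
    (hfl : ε ≤ Int.fract D) (hfu : Int.fract D ≤ 1 - ε) :
    ∀ j : ℕ, Reaches ε D (Int.fract D + j) := by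
  have hf0 : 0 < Int.fract D := lt_of_lt_of_le hε0 hfl
  have hDnf : (⌊D⌋ : ℝ) + Int.fract D = D := Int.floor_add_fract D
  intro j
  induction j with
  | zero =>
    have hx : (0:ℝ) < Int.fract D + (0:ℕ) := by push_cast; linarith
    have hv : Int.fract (D - (Int.fract D + (0:ℕ))) = 0 :=
      fract_eq_of (⌊D⌋) (by push_cast; linarith) le_rfl (by norm_num)
    apply reaches_of_eq (y := Int.fract D - 1)
      (by rw [step_pos ε D _ hx, MR_ladder ε _ hv]; push_cast; ring)
    exact reaches_fresh ε D hε0 hε1 hD hfl hfu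
  | succ j ih =>
    have hx : (0:ℝ) < Int.fract D + (j+1:ℕ) := by push_cast; linarith
    have hv : Int.fract (D - (Int.fract D + (j+1:ℕ))) = 0 :=
      fract_eq_of (⌊D⌋ - 1 - j) (by push_cast; ring_nf; linarith) le_rfl (by norm_num)
    apply reaches_of_eq (y := Int.fract D + j)
      (by rw [step_pos ε D _ hx, MR_ladder ε _ hv]; push_cast; ring)
    exact ih

lemma reaches_D (ε D : ℝ) (hε0 : 0 < ε) (hε1 : ε < 1/2) (hD : 1 < D)
    (hfl : ε ≤ Int.fract D) (hfu : Int.fract D ≤ 1 - ε) : Reaches ε D D := by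
  have h1 := floor_ge_one hD
  have hDnf : (⌊D⌋ : ℝ) + Int.fract D = D := Int.floor_add_fract D
  have hn0 : (0:ℤ) ≤ ⌊D⌋ := by exact_mod_cast (by linarith : (0:ℝ) ≤ (⌊D⌋:ℝ))
  have hcast : ((⌊D⌋.toNat : ℕ) : ℝ) = (⌊D⌋ : ℝ) := by
    exact_mod_cast congrArg (fun z : ℤ => (z : ℝ)) (Int.toNat_of_nonneg hn0)
  have hl := reaches_ladder ε D hε0 hε1 hD hfl hfu ⌊D⌋.toNat
  rwa [show Int.fract D + ((⌊D⌋.toNat : ℕ) : ℝ) = D by rw [hcast]; linarith] at hl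

/-- Any right state whose observation is an integer is on the ladder. -/
lemma reaches_intobs (ε D x : ℝ) (hε0 : 0 < ε) (hε1 : ε < 1/2) (hD : 1 < D)
    (hfl : ε ≤ Int.fract D) (hfu : Int.fract D ≤ 1 - ε)
    (hx0 : 0 < x) (hxD : x ≤ D) (h : Int.fract (D - x) = 0) : Reaches ε D x := by
  have hDnf : (⌊D⌋ : ℝ) + Int.fract D = D := Int.floor_add_fract D
  have hf1 : Int.fract D < 1 := Int.fract_lt_one D
  have hk : (⌊D - x⌋ : ℝ) = D - x := by
    have := Int.floor_add_fract (D - x); rw [h] at this; linarith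
  set k := ⌊D - x⌋ with hkdef
  have hkn : k ≤ ⌊D⌋ := by
    have : (k : ℝ) < (⌊D⌋ : ℝ) + 1 := by rw [hk]; linarith
    exact_mod_cast Int.lt_add_one_iff.mp (by exact_mod_cast this)
  have hm0 : (0:ℤ) ≤ ⌊D⌋ - k := by omega
  have hcast : (((⌊D⌋ - k).toNat : ℕ) : ℝ) = (⌊D⌋ : ℝ) - (k : ℝ) := by
    have := congrArg (fun z : ℤ => (z : ℝ)) (Int.toNat_of_nonneg hm0)
    push_cast at this
    exact_mod_cast this
  have hl := reaches_ladder ε D hε0 hε1 hD hfl hfu (⌊D⌋ - k).toNat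
  rwa [show Int.fract D + (((⌊D⌋ - k).toNat : ℕ) : ℝ) = x by rw [hcast]; linarith] at hl

/-- Reset states jump to the right wall, which is on the ladder. -/
lemma reaches_reset (ε D x : ℝ) (hε0 : 0 < ε) (hε1 : ε < 1/2) (hD : 1 < D)
    (hfl : ε ≤ Int.fract D) (hfu : Int.fract D ≤ 1 - ε)
    (hx0 : 0 < x) (h7 : Int.fract (D - x) ≠ 1/2 - ε/4)
    (h1 : 1/2 - ε < Int.fract (D - x)) (h2 : Int.fract (D - x) ≤ 1 - ε) :
    Reaches ε D x := by
  apply reaches_of_eq (y := D)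
    (by rw [step_pos ε D _ hx0, MR_reset ε _ hε1 h7 h1 h2]; ring)
  exact reaches_D ε D hε0 hε1 hD hfl hfu

/-- Global termination, by induction on the potential `(D - x) * 4 / ε`. -/
lemma reaches_main (ε D : ℝ) (hε0 : 0 < ε) (hε1 : ε < 1/2) (hD : 1 < D)
    (hfl : ε ≤ Int.fract D) (hfu : Int.fract D ≤ 1 - ε) :
    ∀ N : ℕ, ∀ x : ℝ, -D ≤ x → x ≤ D → (D - x) * 4 ≤ N * ε → Reaches ε D x := by
  have hD1 : 1 + ε ≤ D := D_ge ε D hD hfl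
  intro N
  induction N with
  | zero =>
    intro x hl hu hb
    norm_num at hb
    have : x = D := le_antisymm hu (by nlinarith)
    rw [this]; exact reaches_D ε D hε0 hε1 hD hfl hfu
  | succ N ih =>
    intro x hl hu hb
    push_cast at hb
    have hc : ((N:ℝ) + 1) * ε = (N:ℝ) * ε + ε := by ring
    rcases lt_trichotomy x 0 with hx | hx | hx
    · -- left state: one step to the right by at least 1/2 + ε/4
      have hm1 := ML_lb ε (D + x) hε0 hε1
      have hm2 := ML_ub ε (D + x) hε0
      apply reaches_of_eq (step_neg ε D x hx)
      exact ih (x + ML ε (D + x)) (by linarith) (by linarith) (by linarith)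
    · rw [hx]; exact reaches_zero ε D
    · -- right state
      have hφ0 : 0 ≤ Int.fract (D - x) := Int.fract_nonneg _
      have hφ1 : Int.fract (D - x) < 1 := Int.fract_lt_one _
      by_cases h0 : Int.fract (D - x) = 0
      · exact reaches_intobs ε D x hε0 hε1 hD hfl hfu hx hu h0
      by_cases h7 : Int.fract (D - x) = 1/2 - ε/4
      · -- marker class
        have hst : step (Mfun ε) D x = x - ε/4 := by
          rw [step_pos ε D x hx, MR_B7 ε _ hε0 hε1 h7]; ring
        rcases lt_trichotomy (x - ε/4) 0 with hx' | hx' | hx'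
        · -- crossed into a left state whose observation is not integral
          have hsne := fract_ne_zero_near ε D (x - ε/4) hε0 hε1 hfl (by linarith) hx'
          have hm1 := ML_lb' ε (D + (x - ε/4)) hε0 hε1 hsne
          have hm2 := ML_ub ε (D + (x - ε/4)) hε0
          apply reaches_of_eq hst
          apply reaches_of_eq (step_neg ε D _ hx')
          exact ih (x - ε/4 + ML ε (D + (x - ε/4))) (by linarith) (by linarith) (by linarith)
        · exact reaches_of_eq hst (by rw [hx']; exact reaches_zero ε D)
        · -- stays on the right: lands in the reset class (fract 1/2)
          have hK : (⌊D - x⌋ : ℝ) + Int.fract (D - x) = D - x := Int.floor_add_fract (D - x)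
          rw [h7] at hK
          have hφ' : Int.fract (D - (x - ε/4)) = 1/2 :=
            fract_eq_of (⌊D - x⌋) (by linarith) (by norm_num) (by norm_num)
          apply reaches_of_eq hst
          exact reaches_reset ε D (x - ε/4) hε0 hε1 hD hfl hfu hx'
            (by rw [hφ']; intro h; linarith) (by rw [hφ']; linarith) (by rw [hφ']; linarith)
      by_cases hU : Int.fract (D - x) ≤ 1/2 - ε ∨ 1 - ε < Int.fract (D - x)
      · -- fix class: move left by 1/2
        have hst : step (Mfun ε) D x = x - 1/2 := by
          rw [step_pos ε D x hx, MR_fix ε _ h0 h7 hU]; ring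
        rcases lt_trichotomy (x - 1/2) 0 with hx' | hx' | hx'
        · -- crossed into a left state
          have hm1 := ML_lb ε (D + (x - 1/2)) hε0 hε1
          have hm2 := ML_ub ε (D + (x - 1/2)) hε0
          apply reaches_of_eq hst
          apply reaches_of_eq (step_neg ε D _ hx')
          exact ih (x - 1/2 + ML ε (D + (x - 1/2))) (by linarith) (by linarith) (by linarith)
        · exact reaches_of_eq hst (by rw [hx']; exact reaches_zero ε D)
        · -- stays on the right
          have hK : (⌊D - x⌋ : ℝ) + Int.fract (D - x) = D - x := Int.floor_add_fract (D - x)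
          rcases hU with hUl | hUr
          · -- lower band: lands in the reset class
            have hφpos : 0 < Int.fract (D - x) := lt_of_le_of_ne hφ0 (Ne.symm h0)
            have hφ' : Int.fract (D - (x - 1/2)) = Int.fract (D - x) + 1/2 :=
              fract_eq_of (⌊D - x⌋) (by linarith) (by linarith) (by linarith)
            apply reaches_of_eq hst
            exact reaches_reset ε D (x - 1/2) hε0 hε1 hD hfl hfu hx'
              (by rw [hφ']; intro h; linarith) (by rw [hφ']; linarith) (by rw [hφ']; linarith)
          · -- upper band: new fract is the old one minus 1/2
            have hφ' : Int.fract (D - (x - 1/2)) = Int.fract (D - x) - 1/2 :=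
              fract_eq_of (⌊D - x⌋ + 1) (by push_cast; linarith) (by linarith) (by linarith)
            by_cases h7' : Int.fract (D - x) - 1/2 = 1/2 - ε/4
            · -- marker class at x - 1/2
              have hst2 : step (Mfun ε) D (x - 1/2) = x - 1/2 - ε/4 := by
                rw [step_pos ε D _ hx', MR_B7 ε _ hε0 hε1 (by rw [hφ', h7'])]; ring
              rcases lt_trichotomy (x - 1/2 - ε/4) 0 with hx'' | hx'' | hx''
              · -- crossed into a left state whose observation is not integral
                have hsne := fract_ne_zero_near ε D (x - 1/2 - ε/4) hε0 hε1 hfl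
                  (by linarith) hx''
                have hm1 := ML_lb' ε (D + (x - 1/2 - ε/4)) hε0 hε1 hsne
                have hm2 := ML_ub ε (D + (x - 1/2 - ε/4)) hε0
                apply reaches_of_eq hst
                apply reaches_of_eq hst2
                apply reaches_of_eq (step_neg ε D _ hx'')
                exact ih (x - 1/2 - ε/4 + ML ε (D + (x - 1/2 - ε/4)))
                  (by linarith) (by linarith) (by linarith)
              · exact reaches_of_eq hst (reaches_of_eq hst2 (by rw [hx'']; exact reaches_zero ε D))
              · -- stays on the right: reset class (fract 1/2)
                have hφ'' : Int.fract (D - (x - 1/2 - ε/4)) = 1/2 :=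
                  fract_eq_of (⌊D - x⌋ + 1) (by push_cast; linarith) (by norm_num) (by norm_num)
                apply reaches_of_eq hst
                apply reaches_of_eq hst2
                exact reaches_reset ε D (x - 1/2 - ε/4) hε0 hε1 hD hfl hfu hx''
                  (by rw [hφ'']; intro h; linarith) (by rw [hφ'']; linarith)
                  (by rw [hφ'']; linarith)
            · -- reset class at x - 1/2
              apply reaches_of_eq hst
              exact reaches_reset ε D (x - 1/2) hε0 hε1 hD hfl hfu hx'
                (by rw [hφ']; exact h7') (by rw [hφ']; linarith) (by rw [hφ']; linarith)
      · -- reset class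
        push_neg at hU
        exact reaches_reset ε D x hε0 hε1 hD hfl hfu hx h7 hU.1 hU.2

lemma step_safety (ε D : ℝ) (hε0 : 0 < ε) (hε1 : ε < 1/2) (hD : 1 < D)
    (hfl : ε ≤ Int.fract D) :
    ∀ x ∈ Set.Icc (-D) D, step (Mfun ε) D x ∈ Set.Icc (-D) D := by
  have hD1 : 1 + ε ≤ D := D_ge ε D hD hfl
  rintro x ⟨hl, hu⟩
  rcases lt_trichotomy x 0 with hx | hx | hx
  · rw [step_neg ε D x hx]
    have hm1 := ML_lb ε (D + x) hε0 hε1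
    have hm2 := ML_ub ε (D + x) hε0
    exact ⟨by linarith, by linarith⟩
  · rw [hx]
    have : step (Mfun ε) D 0 = 0 := by unfold step; norm_num
    rw [this]; exact ⟨by linarith, by linarith⟩
  · rw [step_pos ε D x hx]
    unfold MR
    split_ifs with g1 g2 g3
    · exact ⟨by linarith, by linarith⟩
    · exact ⟨by linarith, by linarith⟩
    · exact ⟨by linarith, by linarith⟩
    · exact ⟨by linarith, by linarith⟩

theorem epsilon_omit_solvable (ε : ℝ) (hε0 : 0 < ε) (hε1 : ε < 1 / 2) :
    ∃ M : Side × ℝ → ℝ, ∀ D : ℝ, 1 < D → D - (⌊D⌋ : ℝ) ∈ Set.Icc ε (1 - ε) →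
      (∀ x ∈ Set.Icc (-D) D, step M D x ∈ Set.Icc (-D) D) ∧
      (∀ x₀ ∈ Set.Icc (-D) D, ∃ n : ℕ, (step M D)^[n] x₀ = 0) := by
  refine ⟨Mfun ε, fun D hD hband => ?_⟩
  have hfr : Int.fract D = D - (⌊D⌋ : ℝ) := rfl
  have hfl : ε ≤ Int.fract D := by rw [hfr]; exact hband.1
  have hfu : Int.fract D ≤ 1 - ε := by rw [hfr]; exact hband.2
  refine ⟨step_safety ε D hε0 hε1 hD hfl, ?_⟩
  rintro x₀ ⟨hl, hu⟩
  obtain ⟨N, hN⟩ := exists_nat_ge ((D - x₀) * 4 / ε)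
  have hb : (D - x₀) * 4 ≤ N * ε := by
    rw [div_le_iff₀ hε0] at hN
    linarith
  exact reaches_main ε D hε0 hε1 hD hfl hfu N x₀ hl hu hb
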